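/- Let W_9 ⊆ {0,1}^3 be the configuration W_9 = {(0,0,1),(1,0,0),(0,1,0),(1,1,0)} in Q_3. Then λ(W_9,3) ≥ 4/9. -/

import Mathlib

open Filter

namespace CubeDensity

/-- The automorphism of `Q_d` given by permuting coordinates by `σ` and then
complementing the values in the coordinates where `ε` is `true`. -/
def autMap (d : ℕ) (σ : Equiv.Perm (Fin d)) (ε : Fin d → Bool) (v : Fin d → Bool) :
    Fin d → Bool :=
  fun i => xor (v (σ⁻¹ i)) (ε i)

/-- `K` is an exact copy of `H` in `Q_d`: some automorphism of `Q_d` maps `H` onto `K`. -/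
def ExactCopy (d : ℕ) (H K : Set (Fin d → Bool)) : Prop :=
  ∃ σ : Equiv.Perm (Fin d), ∃ ε : Fin d → Bool, autMap d σ ε '' H = K

/-- The vertex of `Q_n` in the sub-`d`-cube with flip coordinates `F` (and fixed values `g`
outside `F`) corresponding to the vertex `u` of `Q_d`, identifying the flip coordinates
with `Fin d` in increasing order. -/
def embed {n d : ℕ} (F : Finset (Fin n)) (hF : F.card = d) (g : Fin n → Bool)
    (u : Fin d → Bool) : Fin n → Bool :=
  fun i => if h : i ∈ F then u ((F.orderIsoOfFin hF).symm ⟨i, h⟩) else g i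

/-- The sub-`d`-cube of `Q_n` with flip coordinates `F` and fixed values `g` outside `F`
is `H`-good for `S`: the configuration induced by `S` on it is an exact copy of `H`. -/
def IsGood {n d : ℕ} (H : Set (Fin d → Bool)) (S : Set (Fin n → Bool))
    (F : Finset (Fin n)) (hF : F.card = d) (g : Fin n → Bool) : Prop :=
  ExactCopy d H {u : Fin d → Bool | embed F hF g u ∈ S}

/-- The number of `H`-good sub-`d`-cubes of `Q_n`, where a sub-`d`-cube is encoded as a
pair `(F, g)` with `F` the `d`-element set of flip coordinates and `g` the fixed values
outside `F` (normalized to be `false` on `F`). -/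
noncomputable def goodCount (d : ℕ) (H : Set (Fin d → Bool)) (n : ℕ)
    (S : Set (Fin n → Bool)) : ℕ :=
  Nat.card {p : Finset (Fin n) × (Fin n → Bool) //
    ∃ hF : p.1.card = d, (∀ i ∈ p.1, p.2 i = false) ∧ IsGood H S p.1 hF p.2}

/-- `g(H,d,n,S)`: the fraction of the `C(n,d) * 2^(n-d)` sub-`d`-cubes of `Q_n` that are
`H`-good for `S`. -/
noncomputable def gFrac (d : ℕ) (H : Set (Fin d → Bool)) (n : ℕ)
    (S : Set (Fin n → Bool)) : ℝ :=
  (goodCount d H n S : ℝ) / ((n.choose d : ℝ) * 2 ^ (n - d))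

/-- `ex(H,d,n)`: the maximum over all `S ⊆ {0,1}^n` of the fraction of `H`-good
sub-`d`-cubes. -/
noncomputable def exD (d : ℕ) (H : Set (Fin d → Bool)) (n : ℕ) : ℝ :=
  ⨆ S : Set (Fin n → Bool), gFrac d H n S

end CubeDensity

/-!
Lower bound. Fix a set `B` of `m` coordinates of `Q_{3m}`, give the coordinates in `B` weight 2
and the others weight 1, and let `S` be the set of vertices whose ones have total weight 0 or 1
mod 4. On a sub-3-cube whose flip set meets `B` in exactly one coordinate, `S` induces an exact
copy of `W₉` (a finite check over the position of the weight-2 coordinate and the contribution of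
the fixed coordinates). These are `m·C(2m,2)` of the `C(3m,3)` flip sets, a proportion of at
least `4/9`.

Limit. A sub-`d`-cube of `Q_{n+1}` lies in exactly `n + 1 - d` of the `2(n+1)` slices `x_i = b`,
each a copy of `Q_n`, so `g(H,d,n+1,S)` is the average of `g(H,d,n,·)` over the slices of `S`.
Hence `ex(H,d,n)` is nonincreasing for `n ≥ d`, and it is bounded below by `0`.
-/

open Finset

namespace CubeDensity

variable {n d : ℕ}

section Embed

variable (F : Finset (Fin n)) (hF : F.card = d) (g : Fin n → Bool) (u : Fin d → Bool)

theorem embed_orderEmbOfFin (k : Fin d) : embed F hF g u (F.orderEmbOfFin hF k) = u k := by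
  rw [embed, dif_pos (F.orderEmbOfFin_mem hF k)]
  exact congrArg u ((F.orderIsoOfFin hF).symm_apply_eq.mpr rfl)

theorem embed_of_notMem {i : Fin n} (hi : i ∉ F) : embed F hF g u i = g i := dif_neg hi

theorem sum_embed {M : Type*} [AddCommMonoid M] (f : Fin n → Bool → M) :
    ∑ i, f i (embed F hF g u i) =
      ∑ i ∈ Fᶜ, f i (g i) + ∑ k, f (F.orderEmbOfFin hF k) (u k) := by
  rw [← sum_compl_add_sum F]
  congr 1
  · exact sum_congr rfl fun i hi => by rw [embed_of_notMem F hF g u (mem_compl.mp hi)]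
  · have h := sum_map univ (F.orderEmbOfFin hF).toEmbedding fun i => f i (embed F hF g u i)
    rw [map_orderEmbOfFin_univ] at h
    simp only [h, RelEmbedding.coe_toEmbedding, embed_orderEmbOfFin]

theorem orderEmbOfFin_map_succAboveEmb (i : Fin (n + 1))
    (hF' : (F.map i.succAboveEmb).card = d) (k : Fin d) :
    (F.map i.succAboveEmb).orderEmbOfFin hF' k = i.succAbove (F.orderEmbOfFin hF k) := by
  refine congrFun (orderEmbOfFin_unique hF' (f := fun k => i.succAbove (F.orderEmbOfFin hF k))
    (fun k => mem_map_of_mem _ (F.orderEmbOfFin_mem hF k)) ?_).symm k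
  exact (Fin.strictMono_succAbove i).comp (F.orderEmbOfFin hF).strictMono

theorem embed_map_succAboveEmb (i : Fin (n + 1)) (b : Bool)
    (hF' : (F.map i.succAboveEmb).card = d) :
    embed (F.map i.succAboveEmb) hF' (i.insertNth b g) u = i.insertNth b (embed F hF g u) := by
  funext j
  rcases eq_or_ne j i with rfl | hj
  · have hj : j ∉ F.map j.succAboveEmb := by simp [Fin.succAbove_ne]
    rw [embed_of_notMem _ _ _ _ hj, Fin.insertNth_apply_same, Fin.insertNth_apply_same]
  obtain ⟨k, rfl⟩ := Fin.exists_succAbove_eq hj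
  rw [Fin.insertNth_apply_succAbove]
  by_cases hk : k ∈ F
  · obtain ⟨a, rfl⟩ : ∃ a, F.orderEmbOfFin hF a = k := by
      rw [← Set.mem_range, range_orderEmbOfFin]
      exact hk
    rw [← orderEmbOfFin_map_succAboveEmb F hF i hF', embed_orderEmbOfFin, embed_orderEmbOfFin]
  · have hk' : i.succAbove k ∉ F.map i.succAboveEmb := by simpa using hk
    rw [embed_of_notMem _ _ _ _ hk', embed_of_notMem _ _ _ _ hk, Fin.insertNth_apply_succAbove]

end Embed

section Slice

variable (H : Set (Fin d → Bool))

def slice (i : Fin (n + 1)) (b : Bool) (S : Set (Fin (n + 1) → Bool)) : Set (Fin n → Bool) :=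
  {v | i.insertNth b v ∈ S}

def IsGoodCube (S : Set (Fin n → Bool)) (p : Finset (Fin n) × (Fin n → Bool)) : Prop :=
  ∃ hF : p.1.card = d, (∀ i ∈ p.1, p.2 i = false) ∧ IsGood H S p.1 hF p.2

open Classical in
theorem goodCount_eq_card (S : Set (Fin n → Bool)) :
    goodCount d H n S = #{p | IsGoodCube H S p} :=
  Nat.subtype_card _ fun p => by simp [IsGoodCube]

theorem isGoodCube_slice_iff (S : Set (Fin (n + 1) → Bool)) (i : Fin (n + 1)) (b : Bool)
    (p : Finset (Fin n) × (Fin n → Bool)) :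
    IsGoodCube H (slice i b S) p ↔
      IsGoodCube H S (p.1.map i.succAboveEmb, i.insertNth b p.2) := by
  obtain ⟨F, g⟩ := p
  have hgood (hF : F.card = d) (hF' : (F.map i.succAboveEmb).card = d) :
      IsGood H (slice i b S) F hF g ↔
        IsGood H S (F.map i.succAboveEmb) hF' (i.insertNth b g) := by
    simp only [IsGood, embed_map_succAboveEmb F hF g _ i b hF']
    rfl
  simp only [IsGoodCube, forall_mem_map, Fin.succAboveEmb_apply, Fin.insertNth_apply_succAbove]
  exact ⟨fun ⟨hF, hg, h⟩ => ⟨by rwa [card_map], hg, (hgood _ _).mp h⟩,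
    fun ⟨hF', hg, h⟩ => ⟨by rwa [card_map] at hF', hg, (hgood _ _).mpr h⟩⟩

def extendCube (t : (Fin (n + 1) × Bool) × (Finset (Fin n) × (Fin n → Bool))) :
    (Finset (Fin (n + 1)) × (Fin (n + 1) → Bool)) × Fin (n + 1) :=
  ((t.2.1.map t.1.1.succAboveEmb, t.1.1.insertNth t.1.2 t.2.2), t.1.1)

noncomputable def restrictCube
    (t : (Finset (Fin (n + 1)) × (Fin (n + 1) → Bool)) × Fin (n + 1)) :
    (Fin (n + 1) × Bool) × (Finset (Fin n) × (Fin n → Bool)) :=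
  ((t.2, t.1.2 t.2), (t.1.1.preimage t.2.succAboveEmb t.2.succAboveEmb.injective.injOn,
    t.2.removeNth t.1.2))

theorem map_preimage_succAbove {i : Fin (n + 1)} {F : Finset (Fin (n + 1))} (hi : i ∉ F) :
    (F.preimage i.succAboveEmb i.succAboveEmb.injective.injOn).map i.succAboveEmb = F := by
  ext j
  rcases eq_or_ne j i with rfl | hj
  · simp [hi, Fin.succAbove_ne]
  obtain ⟨k, rfl⟩ := Fin.exists_succAbove_eq hj
  simp

open Classical in
theorem sum_goodCount_slice (S : Set (Fin (n + 1) → Bool)) :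
    ∑ ib : Fin (n + 1) × Bool, goodCount d H n (slice ib.1 ib.2 S) =
      (n + 1 - d) * goodCount d H (n + 1) S := by
  have hleft : ∑ ib : Fin (n + 1) × Bool, goodCount d H n (slice ib.1 ib.2 S) =
      #{t : (Fin (n + 1) × Bool) × (Finset (Fin n) × (Fin n → Bool)) |
        IsGoodCube H (slice t.1.1 t.1.2 S) t.2} := by
    simp only [goodCount_eq_card, card_filter, Fintype.sum_prod_type]
  have hright : #{t : (Finset (Fin (n + 1)) × (Fin (n + 1) → Bool)) × Fin (n + 1) |
      IsGoodCube H S t.1 ∧ t.2 ∉ t.1.1} = (n + 1 - d) * goodCount d H (n + 1) S := by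
    rw [goodCount_eq_card, card_filter, card_filter, Fintype.sum_prod_type, mul_sum]
    refine sum_congr rfl fun p _ => ?_
    by_cases hp : IsGoodCube H S p
    · simp only [hp, true_and, if_true, mul_one]
      rw [← card_filter, filter_notMem_eq_sdiff, ← compl_eq_univ_sdiff, card_compl,
        Fintype.card_fin, hp.1]
    · simp [hp]
  rw [hleft, ← hright]
  refine card_nbij' extendCube restrictCube ?_ ?_ ?_ ?_
  · rintro ⟨⟨i, b⟩, p⟩ hp
    simp only [coe_filter, mem_univ, true_and, Set.mem_ofPred_eq] at hp ⊢
    exact ⟨(isGoodCube_slice_iff H S i b p).mp hp, by simp [extendCube, Fin.succAbove_ne]⟩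
  · rintro ⟨⟨F, g⟩, i⟩ hp
    simp only [coe_filter, mem_univ, true_and, Set.mem_ofPred_eq] at hp ⊢
    obtain ⟨hp, hi⟩ := hp
    simp only [restrictCube]
    rw [isGoodCube_slice_iff, map_preimage_succAbove hi, Fin.insertNth_self_removeNth]
    exact hp
  · rintro ⟨⟨i, b⟩, ⟨F, g⟩⟩ -
    simp only [extendCube, restrictCube, preimage_map, Fin.insertNth_apply_same,
      Fin.removeNth_insertNth]
  · rintro ⟨⟨F, g⟩, i⟩ hi
    simp only [coe_filter, mem_univ, true_and, Set.mem_ofPred_eq] at hi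
    simp only [extendCube, restrictCube]
    rw [map_preimage_succAbove hi.2, Fin.insertNth_self_removeNth]

end Slice

section Count

theorem card_filter_eq_false_on (F : Finset (Fin n)) :
    #{g : Fin n → Bool | ∀ i ∈ F, g i = false} = 2 ^ (n - #F) := by
  have hpi : ({g : Fin n → Bool | ∀ i ∈ F, g i = false} : Finset _) =
      Fintype.piFinset fun i => if i ∈ F then {false} else univ := by
    ext g
    simp only [mem_filter, mem_univ, true_and, Fintype.mem_piFinset]
    refine forall_congr' fun i => ?_
    split_ifs <;> simp [*]
  rw [hpi, Fintype.card_piFinset]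
  simp [apply_ite, prod_ite, filter_notMem_eq_sdiff, ← compl_eq_univ_sdiff, card_compl]

theorem card_filter_flipSet_mem (s : Finset (Finset (Fin n))) (hs : ∀ F ∈ s, F.card = d) :
    #{p : Finset (Fin n) × (Fin n → Bool) | p.1 ∈ s ∧ ∀ i ∈ p.1, p.2 i = false} =
      #s * 2 ^ (n - d) := by
  calc _ = ∑ F, if F ∈ s then #{g : Fin n → Bool | ∀ i ∈ F, g i = false} else 0 := by
        rw [card_filter, Fintype.sum_prod_type]
        refine sum_congr rfl fun F _ => ?_
        split_ifs with hF <;> simp [hF]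
    _ = ∑ _F ∈ s, 2 ^ (n - d) := by
        rw [sum_ite_mem, univ_inter]
        exact sum_congr rfl fun F hF => by rw [card_filter_eq_false_on, hs F hF]
    _ = #s * 2 ^ (n - d) := by rw [sum_const, smul_eq_mul]

variable (H : Set (Fin d → Bool))

theorem goodCount_le (S : Set (Fin n → Bool)) :
    goodCount d H n S ≤ n.choose d * 2 ^ (n - d) := by
  classical
  calc goodCount d H n S
      ≤ #{p : Finset (Fin n) × (Fin n → Bool) |
          p.1 ∈ powersetCard d univ ∧ ∀ i ∈ p.1, p.2 i = false} := by
        rw [goodCount_eq_card]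
        exact card_le_card (monotone_filter_right _
          fun p _ ⟨hF, hg, _⟩ => ⟨mem_powersetCard_univ.2 hF, hg⟩)
    _ = n.choose d * 2 ^ (n - d) := by
        rw [card_filter_flipSet_mem _ fun F hF => mem_powersetCard_univ.1 hF, card_powersetCard,
          card_univ, Fintype.card_fin]

theorem card_mul_le_goodCount (S : Set (Fin n → Bool)) (s : Finset (Finset (Fin n)))
    (hs : ∀ F ∈ s, ∃ hF : F.card = d, ∀ g, IsGood H S F hF g) :
    #s * 2 ^ (n - d) ≤ goodCount d H n S := by
  classical
  rw [← card_filter_flipSet_mem s fun F hF => (hs F hF).1, goodCount_eq_card]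
  exact card_le_card (monotone_filter_right _
    fun p _ ⟨hF, hg⟩ => ⟨(hs _ hF).1, hg, (hs _ hF).2 _⟩)

end Count

section Monotone

variable (H : Set (Fin d → Bool))

theorem gFrac_le_one (hd : d ≤ n) (S : Set (Fin n → Bool)) : gFrac d H n S ≤ 1 := by
  rw [gFrac, div_le_one (by positivity [Nat.choose_pos hd])]
  exact_mod_cast goodCount_le H S

theorem gFrac_le_exD (hd : d ≤ n) (S : Set (Fin n → Bool)) : gFrac d H n S ≤ exD d H n :=
  le_ciSup ⟨1, Set.forall_mem_range.2 (gFrac_le_one H hd)⟩ S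

theorem exD_nonneg (hd : d ≤ n) : 0 ≤ exD d H n :=
  (div_nonneg (Nat.cast_nonneg _) (by positivity)).trans (gFrac_le_exD H hd ∅)

theorem two_mul_succ_mul_gFrac (hd : d ≤ n) (S : Set (Fin (n + 1) → Bool)) :
    2 * (n + 1) * gFrac d H (n + 1) S =
      ∑ ib : Fin (n + 1) × Bool, gFrac d H n (slice ib.1 ib.2 S) := by
  have hchoose : (n.choose d : ℝ) * (n + 1) = ((n + 1).choose d : ℝ) * (n + 1 - d : ℕ) := by
    exact_mod_cast Nat.choose_mul_succ_eq n d
  have hpow : (2 : ℝ) ^ (n + 1 - d) = 2 * 2 ^ (n - d) := by rw [Nat.sub_add_comm hd, pow_succ']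
  have hC : (n.choose d : ℝ) ≠ 0 := by exact_mod_cast (Nat.choose_pos hd).ne'
  have hC' : ((n + 1).choose d : ℝ) ≠ 0 := by exact_mod_cast (Nat.choose_pos (by omega)).ne'
  simp only [gFrac, ← sum_div, ← Nat.cast_sum, sum_goodCount_slice, hpow, Nat.cast_mul]
  field_simp
  linear_combination (goodCount d H (n + 1) S : ℝ) * hchoose

theorem exD_succ_le (hd : d ≤ n) : exD d H (n + 1) ≤ exD d H n := by
  refine ciSup_le fun S => le_of_mul_le_mul_left ?_ (by positivity : (0 : ℝ) < 2 * (n + 1))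
  rw [two_mul_succ_mul_gFrac H hd]
  calc _ ≤ ∑ _ib : Fin (n + 1) × Bool, exD d H n :=
        sum_le_sum fun ib _ => gFrac_le_exD H hd _
    _ = 2 * (n + 1) * exD d H n := by simp [mul_comm]

theorem exists_tendsto_exD : ∃ L, Tendsto (exD d H) atTop (nhds L) := by
  have hanti : Antitone fun k => exD d H (k + d) := antitone_nat_of_succ_le fun k => by
    simpa only [Nat.add_right_comm] using exD_succ_le H (Nat.le_add_left d k)
  have hbdd : BddBelow (Set.range fun k => exD d H (k + d)) :=
    ⟨0, Set.forall_mem_range.2 fun k => exD_nonneg H (Nat.le_add_left d k)⟩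
  exact ⟨_, (tendsto_add_atTop_iff_nat d).1 (tendsto_atTop_ciInf hanti hbdd)⟩

end Monotone

section Construction

def W9 : Set (Fin 3 → Bool) :=
  {![false, false, true], ![true, false, false], ![false, true, false], ![true, true, false]}

def weight (B : Finset (Fin n)) (i : Fin n) : ZMod 4 := if i ∈ B then 2 else 1

def witness (B : Finset (Fin n)) : Set (Fin n → Bool) :=
  {v | ∑ i, (if v i then weight B i else 0) ∈ ({0, 1} : Set (ZMod 4))}

theorem exactCopy_W9 (k : Fin 3) (A : ZMod 4) :
    ExactCopy 3 W9
      {u | A + ∑ j, (if u j then weight {k} j else 0) ∈ ({0, 1} : Set (ZMod 4))} := by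
  simp only [ExactCopy, W9, Set.image_insert_eq, Set.image_singleton, Set.ext_iff,
    Set.mem_insert_iff, Set.mem_singleton_iff, Set.mem_ofPred_eq, weight, mem_singleton]
  revert k A
  decide

theorem isGood_witness (B : Finset (Fin n)) {F : Finset (Fin n)} (hF : F.card = 3)
    (hFB : #(F ∩ B) = 1) (g : Fin n → Bool) : IsGood W9 (witness B) F hF g := by
  obtain ⟨x, hx⟩ := card_eq_one.1 hFB
  have hxF : x ∈ F := (mem_inter.1 (hx ▸ mem_singleton_self x)).1
  obtain ⟨k, rfl⟩ : ∃ k, F.orderEmbOfFin hF k = x := by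
    rw [← Set.mem_range, range_orderEmbOfFin]
    exact hxF
  have hweight (j : Fin 3) : weight B (F.orderEmbOfFin hF j) = weight {k} j := by
    have hmem : F.orderEmbOfFin hF j ∈ B ↔ j = k := by
      rw [← (F.orderEmbOfFin hF).injective.eq_iff, ← mem_singleton, ← hx, mem_inter,
        and_iff_right (F.orderEmbOfFin_mem hF j)]
    simp only [weight, hmem, mem_singleton]
  have hset : {u | embed F hF g u ∈ witness B} =
      {u | ∑ i ∈ Fᶜ, (if g i then weight B i else 0) +
        ∑ j, (if u j then weight {k} j else 0) ∈ ({0, 1} : Set (ZMod 4))} := by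
    ext u
    simp only [witness, Set.mem_ofPred_eq, hweight,
      sum_embed F hF g u fun i b => if b then weight B i else 0]
  rw [IsGood, hset]
  exact exactCopy_W9 k _

theorem card_mul_choose_le_card_inter_eq_one {α : Type*} [Fintype α] [DecidableEq α]
    (B : Finset α) (k : ℕ) :
    #B * (#Bᶜ).choose k ≤ #{F : Finset α | F.card = k + 1 ∧ #(F ∩ B) = 1} := by
  have hsplit : ∀ q ∈ B ×ˢ powersetCard k Bᶜ,
      q.1 ∉ q.2 ∧ insert q.1 q.2 ∩ B = {q.1} := by
    rintro ⟨x, P⟩ hq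
    obtain ⟨hx, hPB, -⟩ : x ∈ B ∧ P ⊆ Bᶜ ∧ P.card = k := by
      simpa [mem_powersetCard] using hq
    have hdisj : Disjoint P B := subset_compl_iff_disjoint_right.1 hPB
    exact ⟨fun h => disjoint_left.1 hdisj h hx, by
      rw [insert_inter_of_mem hx, disjoint_iff_inter_eq_empty.1 hdisj, insert_empty]⟩
  rw [← card_powersetCard, ← card_product]
  refine card_le_card_of_injOn (fun q => insert q.1 q.2) (fun q hq => ?_) fun q hq q' hq' h => ?_
  · obtain ⟨hxP, hinter⟩ := hsplit q hq
    have hcard : q.2.card = k := (mem_powersetCard.1 (mem_product.1 hq).2).2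
    simp [card_insert_of_notMem hxP, hcard, hinter]
  · obtain ⟨hxP, hinter⟩ := hsplit q hq
    obtain ⟨hxP', hinter'⟩ := hsplit q' hq'
    replace h : insert q.1 q.2 = insert q'.1 q'.2 := h
    have hx : q.1 = q'.1 := singleton_injective (by rw [← hinter, ← hinter', h])
    refine Prod.ext hx ?_
    rw [← erase_insert hxP, ← erase_insert hxP', h, hx]

theorem four_mul_choose_three_le (m : ℕ) :
    4 * (3 * m).choose 3 ≤ 9 * (m * (2 * m).choose 2) := by
  have h3 := Nat.descFactorial_eq_factorial_mul_choose (3 * m) 3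
  have h2 := Nat.descFactorial_eq_factorial_mul_choose (2 * m) 2
  rcases m with _ | m
  · simp
  simp only [Nat.descFactorial_succ, Nat.descFactorial_zero, Nat.factorial, Nat.sub_zero,
    mul_one, Nat.succ_eq_add_one, zero_add] at h3 h2
  rw [show 3 * (m + 1) - 2 = 3 * m + 1 by omega, show 3 * (m + 1) - 1 = 3 * m + 2 by omega] at h3
  rw [show 2 * (m + 1) - 1 = 2 * m + 1 by omega] at h2
  -- the two sides differ by `9m² - 4m`
  nlinarith [congrArg ((m + 1) * ·) h2]

theorem four_ninths_le_exD {m : ℕ} (hm : 0 < m) : 4 / 9 ≤ exD 3 W9 (3 * m) := by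
  obtain ⟨B, -, hB⟩ := exists_subset_card_eq (s := (univ : Finset (Fin (3 * m)))) (n := m)
    (by rw [card_univ, Fintype.card_fin]; omega)
  have hBc : #Bᶜ = 2 * m := by rw [card_compl, Fintype.card_fin, hB]; omega
  have hgood : m * (2 * m).choose 2 * 2 ^ (3 * m - 3) ≤ goodCount 3 W9 (3 * m) (witness B) :=
    calc m * (2 * m).choose 2 * 2 ^ (3 * m - 3)
        ≤ #{F : Finset (Fin (3 * m)) | F.card = 2 + 1 ∧ #(F ∩ B) = 1} * 2 ^ (3 * m - 3) := by
          gcongr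
          simpa only [hB, hBc] using card_mul_choose_le_card_inter_eq_one B 2
      _ ≤ goodCount 3 W9 (3 * m) (witness B) :=
          card_mul_le_goodCount W9 _ _ fun F hF => by
            obtain ⟨hcard, hinter⟩ := (mem_filter.1 hF).2
            exact ⟨hcard, isGood_witness B hcard hinter⟩
  have hchoose : (4 * (3 * m).choose 3 : ℝ) ≤ 9 * (m * (2 * m).choose 2) := by
    exact_mod_cast four_mul_choose_three_le m
  have hgood' : (m * (2 * m).choose 2 * 2 ^ (3 * m - 3) : ℝ) ≤
      goodCount 3 W9 (3 * m) (witness B) := by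
    exact_mod_cast hgood
  refine le_trans ?_ (gFrac_le_exD W9 (by omega) (witness B))
  rw [gFrac, le_div_iff₀ (by positivity [Nat.choose_pos (by omega : 3 ≤ 3 * m)])]
  nlinarith [pow_pos (two_pos : (0 : ℝ) < 2) (3 * m - 3)]

end Construction

end CubeDensity

/-- λ(W₉, 3) ≥ 4/9, where W₉ = {(0,0,1),(1,0,0),(0,1,0),(1,1,0)} in Q₃. -/
theorem dCubeDensity_W9_ge :
    ∃ L : ℝ,
      Filter.Tendsto
        (fun n => CubeDensity.exD 3
          ({![false, false, true], ![true, false, false],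
            ![false, true, false], ![true, true, false]} : Set (Fin 3 → Bool)) n)
        Filter.atTop (nhds L) ∧ 4 / 9 ≤ L := by
  obtain ⟨L, hL⟩ := CubeDensity.exists_tendsto_exD CubeDensity.W9
  have hsub : Tendsto (fun m : ℕ => 3 * m) atTop atTop :=
    tendsto_atTop_mono (fun m => Nat.le_mul_of_pos_left m three_pos) tendsto_id
  exact ⟨L, hL, ge_of_tendsto (hL.comp hsub)
    (eventually_atTop.2 ⟨1, fun m hm => CubeDensity.four_ninths_le_exD hm⟩)⟩
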